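/- The binary Gray image of the octacode is a (nonlinear) binary code of length 16 with 256 codewords and minimum Hamming distance 6 — i.e., it has the parameters of the Nordstrom-Robinson code. -/

import Mathlib

open Polynomial

def alphaZ4 (i : ZMod 4) : ZMod 2 := (i.val : ZMod 2)
def betaZ4 (i : ZMod 4) : ZMod 2 := ((i.val / 2 : ℕ) : ZMod 2)
def gammaZ4 (i : ZMod 4) : ZMod 2 := betaZ4 i + alphaZ4 i

def grayMap {n : ℕ} (a : Fin n → ZMod 4) : (Fin n ⊕ Fin n) → ZMod 2 :=
  Sum.elim (fun i => betaZ4 (a i)) (fun i => gammaZ4 (a i))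

/-- The dual of a quaternary code under the standard inner product mod 4. -/
def dualSet {n : ℕ} (D : Set (Fin n → ZMod 4)) : Set (Fin n → ZMod 4) :=
  { b | ∀ a ∈ D, ∑ i, a i * b i = 0 }

/-- The extended cyclic code of length `n+1` over `Z/4Z`: the cyclic code of
length `n` generated by `g` (the multiples of `g` in `(Z/4Z)[X]/(Xⁿ-1)`),
extended by an overall parity check (the last coordinate is the negative of
the sum of the first `n`). -/
def extendedCyclic (n : ℕ) (g : Polynomial (ZMod 4)) : Set (Fin (n + 1) → ZMod 4) :=
  { c | (∃ q : Polynomial (ZMod 4),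
          ∀ i : Fin n, c i.castSucc = ((q * g) %ₘ (X ^ n - 1)).coeff i) ∧
        c (Fin.last n) = -(∑ i : Fin n, c i.castSucc) }

/-! ### Auxiliary definitions -/

noncomputable def gP : (ZMod 4)[X] := X ^ 3 + 3 * X ^ 2 + 2 * X + 3
noncomputable def kP : (ZMod 4)[X] := (X - 1) * (X ^ 3 + 2 * X ^ 2 + X + 3)

/-- Lee weight on `Z/4Z`. -/
def lee : ZMod 4 → ℕ := fun x => min x.val (4 - x.val)

/-- Generator map for the octacode. -/
def Frow (r : Fin 4 → ZMod 4) : Fin 8 → ZMod 4 := fun i =>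
  match i with
  | ⟨0, _⟩ => 3 * r 0
  | ⟨1, _⟩ => 2 * r 0 + 3 * r 1
  | ⟨2, _⟩ => 3 * r 0 + 2 * r 1 + 3 * r 2
  | ⟨3, _⟩ => r 0 + 3 * r 1 + 2 * r 2 + 3 * r 3
  | ⟨4, _⟩ => r 1 + 3 * r 2 + 2 * r 3
  | ⟨5, _⟩ => r 2 + 3 * r 3
  | ⟨6, _⟩ => r 3
  | ⟨7, _⟩ => 3 * r 0 + 3 * r 1 + 3 * r 2 + 3 * r 3

lemma four_zero : (4 : ZMod 4) = 0 := rfl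

lemma four_eq : ((4 : (ZMod 4)[X])) = 0 := by
  calc (4:(ZMod 4)[X]) = ((4:ℕ):(ZMod 4)[X]) := by norm_cast
  _ = C ((4:ℕ):ZMod 4) := (C_eq_natCast _).symm
  _ = 0 := by rw [show ((4:ℕ):ZMod 4) = 0 from rfl, map_zero]

lemma kg : kP * gP = X ^ 7 - 1 := by
  unfold kP gP
  linear_combination (X^6+X^5+X^4+X^3-2*X^2-2 : (ZMod 4)[X]) * four_eq

lemma kP_monic : kP.Monic := by
  have h1 : (X - 1 : (ZMod 4)[X]).Monic := by
    simpa using monic_X_sub_C (1 : ZMod 4)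
  have h2 : (X^3+2*X^2+X+3 : (ZMod 4)[X]).Monic := by monicity!
  exact h1.mul h2

lemma kP_deg : kP.degree = 4 := by
  have := kP_monic
  unfold kP at *
  compute_degree!

lemma gP_deg : gP.degree ≤ 3 := by unfold gP; compute_degree

instance : Nontrivial (ZMod 4) := ⟨0, 1, by decide⟩

lemma X7_monic : (X ^ 7 - 1 : (ZMod 4)[X]).Monic := by
  have := monic_X_pow_sub_C (1 : ZMod 4) (n := 7) (by norm_num)
  simpa using this

lemma X7_deg : (X ^ 7 - 1 : (ZMod 4)[X]).degree = 7 := by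
  have := degree_X_pow_sub_C (R := ZMod 4) (n := 7) (by norm_num) 1
  simpa using this

lemma rg_deg_lt {r : (ZMod 4)[X]} (hr : r.degree < 4) :
    (r * gP).degree < (X ^ 7 - 1 : (ZMod 4)[X]).degree := by
  rw [X7_deg]
  have h1 : r.degree ≤ 3 := by
    rcases hd : r.degree with _ | n
    · exact bot_le
    · rw [hd] at hr
      rw [WithBot.some_eq_coe] at hr ⊢
      exact WithBot.coe_le_coe.mpr (Nat.lt_succ_iff.mp (WithBot.coe_lt_coe.mp hr))
  have h6 : ((3 : WithBot ℕ) + 3) < 7 := by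
    rw [(by norm_cast : ((3:WithBot ℕ) + 3) = ((6:ℕ):WithBot ℕ)),
      (by norm_cast : ((7:WithBot ℕ)) = ((7:ℕ):WithBot ℕ))]
    exact_mod_cast (by norm_num : (6:ℕ) < 7)
  calc (r * gP).degree ≤ r.degree + gP.degree := degree_mul_le _ _
    _ ≤ (3 : WithBot ℕ) + 3 := add_le_add h1 gP_deg
    _ < 7 := h6

/-- Key: reduction of `q * g` mod `X^7 - 1`. -/
lemma key (q : (ZMod 4)[X]) : (q * gP) %ₘ (X ^ 7 - 1) = (q %ₘ kP) * gP := by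
  have hlt : (q %ₘ kP).degree < 4 := kP_deg ▸ degree_modByMonic_lt q kP_monic
  have heq : (q %ₘ kP) * gP + (X ^ 7 - 1) * (q /ₘ kP) = q * gP := by
    have hq := modByMonic_add_div q kP
    calc (q %ₘ kP) * gP + (X ^ 7 - 1) * (q /ₘ kP)
        = (q %ₘ kP) * gP + (kP * gP) * (q /ₘ kP) := by rw [kg]
      _ = (q %ₘ kP + kP * (q /ₘ kP)) * gP := by ring
      _ = q * gP := by rw [hq]
  exact (div_modByMonic_unique (q /ₘ kP) ((q %ₘ kP) * gP) X7_monic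
    ⟨heq, rg_deg_lt hlt⟩).2

lemma gc0 : gP.coeff 0 = 3 := by unfold gP; simp [coeff_X]
lemma gc1 : gP.coeff 1 = 2 := by unfold gP; simp [coeff_X]
lemma gc2 : gP.coeff 2 = 3 := by unfold gP; simp [coeff_X]
lemma gc3 : gP.coeff 3 = 1 := by unfold gP; simp [coeff_X]
lemma gc4 : gP.coeff 4 = 0 := by unfold gP; simp [coeff_X]
lemma gc5 : gP.coeff 5 = 0 := by unfold gP; simp [coeff_X]
lemma gc6 : gP.coeff 6 = 0 := by unfold gP; simp [coeff_X]

lemma coeff_hi {r : (ZMod 4)[X]} (hr : r.degree < 4) {j : ℕ} (hj : 4 ≤ j) :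
    r.coeff j = 0 :=
  coeff_eq_zero_of_degree_lt (lt_of_lt_of_le hr (by exact_mod_cast Nat.cast_le.mpr hj))

lemma m0 {r : (ZMod 4)[X]} (hr : r.degree < 4) : (r * gP).coeff 0 = 3 * r.coeff 0 := by
  rw [coeff_mul, Finset.Nat.sum_antidiagonal_eq_sum_range_succ_mk]
  simp [Finset.sum_range_succ, gc0]
  ring

lemma m1 {r : (ZMod 4)[X]} (hr : r.degree < 4) :
    (r * gP).coeff 1 = 2 * r.coeff 0 + 3 * r.coeff 1 := by
  rw [coeff_mul, Finset.Nat.sum_antidiagonal_eq_sum_range_succ_mk]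
  simp [Finset.sum_range_succ, gc0, gc1]
  ring

lemma m2 {r : (ZMod 4)[X]} (hr : r.degree < 4) :
    (r * gP).coeff 2 = 3 * r.coeff 0 + 2 * r.coeff 1 + 3 * r.coeff 2 := by
  rw [coeff_mul, Finset.Nat.sum_antidiagonal_eq_sum_range_succ_mk]
  simp [Finset.sum_range_succ, gc0, gc1, gc2]
  ring

lemma m3 {r : (ZMod 4)[X]} (hr : r.degree < 4) :
    (r * gP).coeff 3 = r.coeff 0 + 3 * r.coeff 1 + 2 * r.coeff 2 + 3 * r.coeff 3 := by
  rw [coeff_mul, Finset.Nat.sum_antidiagonal_eq_sum_range_succ_mk]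
  simp [Finset.sum_range_succ, gc0, gc1, gc2, gc3]
  ring

lemma m4 {r : (ZMod 4)[X]} (hr : r.degree < 4) :
    (r * gP).coeff 4 = r.coeff 1 + 3 * r.coeff 2 + 2 * r.coeff 3 := by
  rw [coeff_mul, Finset.Nat.sum_antidiagonal_eq_sum_range_succ_mk]
  simp [Finset.sum_range_succ, gc0, gc1, gc2, gc3, gc4, coeff_hi hr (le_refl 4)]
  ring

lemma m5 {r : (ZMod 4)[X]} (hr : r.degree < 4) :
    (r * gP).coeff 5 = r.coeff 2 + 3 * r.coeff 3 := by
  rw [coeff_mul, Finset.Nat.sum_antidiagonal_eq_sum_range_succ_mk]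
  simp [Finset.sum_range_succ, gc0, gc1, gc2, gc3, gc4, gc5,
    coeff_hi hr (le_refl 4), coeff_hi hr (by norm_num : (4:ℕ) ≤ 5)]
  ring

lemma m6 {r : (ZMod 4)[X]} (hr : r.degree < 4) : (r * gP).coeff 6 = r.coeff 3 := by
  rw [coeff_mul, Finset.Nat.sum_antidiagonal_eq_sum_range_succ_mk]
  simp [Finset.sum_range_succ, gc0, gc1, gc2, gc3, gc4, gc5, gc6,
    coeff_hi hr (le_refl 4), coeff_hi hr (by norm_num : (4:ℕ) ≤ 5),
    coeff_hi hr (by norm_num : (4:ℕ) ≤ 6)]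

/-- The octacode equals the range of the generator map. -/
lemma octacode_eq : extendedCyclic 7 (X ^ 3 + 3 * X ^ 2 + 2 * X + 3) = Set.range Frow := by
  ext c
  constructor
  · rintro ⟨⟨q, hq⟩, hlast⟩
    set r := q %ₘ kP with hrdef
    have hrd : r.degree < 4 := kP_deg ▸ degree_modByMonic_lt q kP_monic
    refine ⟨fun j => r.coeff j, ?_⟩
    have hco : ∀ i : Fin 7, c i.castSucc = (r * gP).coeff (i : ℕ) := by
      intro i
      rw [hq i]
      show ((q * gP) %ₘ (X ^ 7 - 1)).coeff (i : ℕ) = _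
      rw [key q]
    have e0 : c (Fin.castSucc 0) = 3 * r.coeff 0 := (hco 0).trans (m0 hrd)
    have e1 : c (Fin.castSucc 1) = 2 * r.coeff 0 + 3 * r.coeff 1 := (hco 1).trans (m1 hrd)
    have e2 : c (Fin.castSucc 2) = 3 * r.coeff 0 + 2 * r.coeff 1 + 3 * r.coeff 2 :=
      (hco 2).trans (m2 hrd)
    have e3 : c (Fin.castSucc 3) =
        r.coeff 0 + 3 * r.coeff 1 + 2 * r.coeff 2 + 3 * r.coeff 3 := (hco 3).trans (m3 hrd)
    have e4 : c (Fin.castSucc 4) = r.coeff 1 + 3 * r.coeff 2 + 2 * r.coeff 3 :=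
      (hco 4).trans (m4 hrd)
    have e5 : c (Fin.castSucc 5) = r.coeff 2 + 3 * r.coeff 3 := (hco 5).trans (m5 hrd)
    have e6 : c (Fin.castSucc 6) = r.coeff 3 := (hco 6).trans (m6 hrd)
    have hl : c (Fin.last 7) =
        -(3 * r.coeff 0 + (2 * r.coeff 0 + 3 * r.coeff 1)
          + (3 * r.coeff 0 + 2 * r.coeff 1 + 3 * r.coeff 2)
          + (r.coeff 0 + 3 * r.coeff 1 + 2 * r.coeff 2 + 3 * r.coeff 3)
          + (r.coeff 1 + 3 * r.coeff 2 + 2 * r.coeff 3)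
          + (r.coeff 2 + 3 * r.coeff 3) + r.coeff 3) := by
      rw [hlast, Fin.sum_univ_seven, e0, e1, e2, e3, e4, e5, e6]
    funext i
    fin_cases i
    · exact e0.symm
    · exact e1.symm
    · exact e2.symm
    · exact e3.symm
    · exact e4.symm
    · exact e5.symm
    · exact e6.symm
    · refine (hl.trans ?_).symm
      show -(3 * r.coeff 0 + (2 * r.coeff 0 + 3 * r.coeff 1)
          + (3 * r.coeff 0 + 2 * r.coeff 1 + 3 * r.coeff 2)
          + (r.coeff 0 + 3 * r.coeff 1 + 2 * r.coeff 2 + 3 * r.coeff 3)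
          + (r.coeff 1 + 3 * r.coeff 2 + 2 * r.coeff 3)
          + (r.coeff 2 + 3 * r.coeff 3) + r.coeff 3) =
        (3 * r.coeff 0 + 3 * r.coeff 1 + 3 * r.coeff 2 + 3 * r.coeff 3 : ZMod 4)
      linear_combination
        (-3 * r.coeff 0 - 3 * r.coeff 1 - 3 * r.coeff 2 - 3 * r.coeff 3) * four_zero
  · rintro ⟨r, rfl⟩
    set q : (ZMod 4)[X] := C (r 0) + C (r 1) * X + C (r 2) * X ^ 2 + C (r 3) * X ^ 3 with hqdef
    have hqd : q.degree < 4 := by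
      have h3 : q.degree ≤ 3 := by rw [hqdef]; compute_degree
      exact lt_of_le_of_lt h3 (by
        rw [(by norm_cast : ((3:WithBot ℕ)) = ((3:ℕ):WithBot ℕ)),
          (by norm_cast : ((4:WithBot ℕ)) = ((4:ℕ):WithBot ℕ))]
        exact_mod_cast (by norm_num : (3:ℕ) < 4))
    have hqc0 : q.coeff 0 = r 0 := by rw [hqdef]; simp [coeff_X]
    have hqc1 : q.coeff 1 = r 1 := by rw [hqdef]; simp [coeff_X]
    have hqc2 : q.coeff 2 = r 2 := by rw [hqdef]; simp [coeff_X]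
    have hqc3 : q.coeff 3 = r 3 := by rw [hqdef]; simp [coeff_X]
    have hqmod : q %ₘ kP = q := by
      rw [modByMonic_eq_self_iff kP_monic, kP_deg]; exact hqd
    constructor
    · refine ⟨q, fun i => ?_⟩
      show Frow r i.castSucc = ((q * gP) %ₘ (X ^ 7 - 1)).coeff (i : ℕ)
      rw [key q, hqmod]
      fin_cases i
      · show (3 * r 0 : ZMod 4) = (q * gP).coeff 0
        rw [m0 hqd, hqc0]
      · show (2 * r 0 + 3 * r 1 : ZMod 4) = (q * gP).coeff 1
        rw [m1 hqd, hqc0, hqc1]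
      · show (3 * r 0 + 2 * r 1 + 3 * r 2 : ZMod 4) = (q * gP).coeff 2
        rw [m2 hqd, hqc0, hqc1, hqc2]
      · show (r 0 + 3 * r 1 + 2 * r 2 + 3 * r 3 : ZMod 4) = (q * gP).coeff 3
        rw [m3 hqd, hqc0, hqc1, hqc2, hqc3]
      · show (r 1 + 3 * r 2 + 2 * r 3 : ZMod 4) = (q * gP).coeff 4
        rw [m4 hqd, hqc1, hqc2, hqc3]
      · show (r 2 + 3 * r 3 : ZMod 4) = (q * gP).coeff 5
        rw [m5 hqd, hqc2, hqc3]
      · show (r 3 : ZMod 4) = (q * gP).coeff 6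
        rw [m6 hqd, hqc3]
    · rw [Fin.sum_univ_seven]
      show (3 * r 0 + 3 * r 1 + 3 * r 2 + 3 * r 3 : ZMod 4) =
        -(3 * r 0 + (2 * r 0 + 3 * r 1) + (3 * r 0 + 2 * r 1 + 3 * r 2)
          + (r 0 + 3 * r 1 + 2 * r 2 + 3 * r 3) + (r 1 + 3 * r 2 + 2 * r 3)
          + (r 2 + 3 * r 3) + r 3)
      linear_combination (3 * r 0 + 3 * r 1 + 3 * r 2 + 3 * r 3) * four_zero

/-! ### Gray map, Lee weight, and the main theorem -/

lemma gray_pointwise : ∀ u v : ZMod 4,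
    ((if betaZ4 u ≠ betaZ4 v then 1 else 0) + (if gammaZ4 u ≠ gammaZ4 v then 1 else 0) : ℕ)
      = lee (u - v) := by decide

lemma gray_dist (a b : Fin 8 → ZMod 4) :
    hammingDist (grayMap a) (grayMap b) = ∑ i : Fin 8, lee (a i - b i) := by
  rw [hammingDist, Finset.card_filter, Fintype.sum_sum_type]
  rw [← Finset.sum_add_distrib]
  refine Finset.sum_congr rfl fun i _ => ?_
  exact gray_pointwise (a i) (b i)

set_option maxRecDepth 10000 in
lemma minwt : ∀ s : Fin 4 → ZMod 4, s ≠ 0 → 6 ≤ ∑ i : Fin 8, lee (Frow s i) := by decide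

set_option maxRecDepth 10000 in
lemma kertriv : ∀ s : Fin 4 → ZMod 4, Frow s = 0 → s = 0 := by decide

set_option maxRecDepth 10000 in
lemma nonlin : ∀ r : Fin 4 → ZMod 4,
    grayMap (Frow r) ≠ grayMap (Frow ![1,0,0,0]) + grayMap (Frow ![0,1,0,0]) := by decide

lemma Frow_sub (r r' : Fin 4 → ZMod 4) (i : Fin 8) :
    Frow r i - Frow r' i = Frow (r - r') i := by
  fin_cases i
  · show 3 * r 0 - 3 * r' 0 = 3 * (r 0 - r' 0); ring
  · show (2*r 0+3*r 1) - (2*r' 0+3*r' 1) = 2*(r 0 - r' 0) + 3*(r 1 - r' 1); ring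
  · show (3*r 0+2*r 1+3*r 2) - (3*r' 0+2*r' 1+3*r' 2)
        = 3*(r 0 - r' 0) + 2*(r 1 - r' 1) + 3*(r 2 - r' 2); ring
  · show (r 0+3*r 1+2*r 2+3*r 3) - (r' 0+3*r' 1+2*r' 2+3*r' 3)
        = (r 0 - r' 0) + 3*(r 1 - r' 1) + 2*(r 2 - r' 2) + 3*(r 3 - r' 3); ring
  · show (r 1+3*r 2+2*r 3) - (r' 1+3*r' 2+2*r' 3)
        = (r 1 - r' 1) + 3*(r 2 - r' 2) + 2*(r 3 - r' 3); ring
  · show (r 2+3*r 3) - (r' 2+3*r' 3) = (r 2 - r' 2) + 3*(r 3 - r' 3); ring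
  · show r 3 - r' 3 = r 3 - r' 3; ring
  · show (3*r 0+3*r 1+3*r 2+3*r 3) - (3*r' 0+3*r' 1+3*r' 2+3*r' 3)
        = 3*(r 0 - r' 0) + 3*(r 1 - r' 1) + 3*(r 2 - r' 2) + 3*(r 3 - r' 3); ring

lemma gray_inj_pt : ∀ u v : ZMod 4, betaZ4 u = betaZ4 v → gammaZ4 u = gammaZ4 v → u = v := by
  decide

lemma gray_injective {n : ℕ} : Function.Injective (grayMap (n := n)) := by
  intro a b h
  funext i
  exact gray_inj_pt (a i) (b i) (congrFun h (Sum.inl i)) (congrFun h (Sum.inr i))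

lemma Frow_injective : Function.Injective Frow := by
  intro r r' h
  have hz : Frow (r - r') = 0 := by
    funext i
    rw [← Frow_sub]
    simp [congrFun h i]
  exact sub_eq_zero.mp (kertriv _ hz)

lemma G_injective : Function.Injective (fun r => grayMap (Frow r)) :=
  fun _ _ h => Frow_injective (gray_injective h)

theorem octacode_gray_nordstrom_robinson :
    Nat.card (grayMap '' extendedCyclic 7 (X ^ 3 + 3 * X ^ 2 + 2 * X + 3)) = 256 ∧
    (¬ ∃ S : AddSubgroup ((Fin 8 ⊕ Fin 8) → ZMod 2),
        (S : Set ((Fin 8 ⊕ Fin 8) → ZMod 2)) =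
          grayMap '' extendedCyclic 7 (X ^ 3 + 3 * X ^ 2 + 2 * X + 3)) ∧
    (∀ x ∈ grayMap '' extendedCyclic 7 (X ^ 3 + 3 * X ^ 2 + 2 * X + 3),
      ∀ y ∈ grayMap '' extendedCyclic 7 (X ^ 3 + 3 * X ^ 2 + 2 * X + 3),
        x ≠ y → 6 ≤ hammingDist x y) ∧
    (∃ x ∈ grayMap '' extendedCyclic 7 (X ^ 3 + 3 * X ^ 2 + 2 * X + 3),
      ∃ y ∈ grayMap '' extendedCyclic 7 (X ^ 3 + 3 * X ^ 2 + 2 * X + 3),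
        x ≠ y ∧ hammingDist x y = 6) := by
  rw [octacode_eq]
  have himg : grayMap '' Set.range Frow = Set.range (fun r => grayMap (Frow r)) := by
    rw [← Set.range_comp]; rfl
  rw [himg]
  refine ⟨?_, ?_, ?_, ?_⟩
  · rw [Nat.card_range_of_injective G_injective]
    simp [Nat.card_eq_fintype_card]
  · rintro ⟨S, hS⟩
    have h1 : grayMap (Frow ![1,0,0,0]) ∈ S := by
      rw [← SetLike.mem_coe, hS]; exact ⟨![1,0,0,0], rfl⟩
    have h2 : grayMap (Frow ![0,1,0,0]) ∈ S := by
      rw [← SetLike.mem_coe, hS]; exact ⟨![0,1,0,0], rfl⟩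
    have h3 := S.add_mem h1 h2
    rw [← SetLike.mem_coe, hS] at h3
    obtain ⟨r, hr⟩ := h3
    exact nonlin r hr
  · rintro x ⟨r, rfl⟩ y ⟨r', rfl⟩ hxy
    have hrr : r ≠ r' := fun h => hxy (by rw [h])
    have hd : hammingDist (grayMap (Frow r)) (grayMap (Frow r')) =
        ∑ i : Fin 8, lee (Frow (r - r') i) := by
      rw [gray_dist]
      exact Finset.sum_congr rfl fun i _ => by rw [Frow_sub]
    rw [hd]
    exact minwt _ (sub_ne_zero.mpr hrr)
  · refine ⟨grayMap (Frow ![1,0,0,0]), ⟨![1,0,0,0], rfl⟩,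
      grayMap (Frow ![0,0,0,0]), ⟨![0,0,0,0], rfl⟩, ?_, ?_⟩
    · intro h
      have h2 := Frow_injective (gray_injective h)
      have h3 : (![1,0,0,0] : Fin 4 → ZMod 4) 0 = ![0,0,0,0] 0 := by rw [h2]
      simp at h3
    · rw [gray_dist]
      decide
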